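/- arXiv:1705.03400 — 3 statements merged into one kernel-verified Lean document; each statement's English description precedes it below -/
import Mathlib

section
/- For r ∈ [0,1), the definite integral ∫₀^π ((1-r²)⁴(1-r² sin² t)) / (√(1-r² sin² t) + r cos t)⁴ dt equals π + (3/2)π r². -/
open Real

lemma sin_pow_int : (∫ t in (0:ℝ)..π, Real.sin t ^ 2 = π/2) ∧ (∫ t in (0:ℝ)..π, Real.sin t ^ 4 = 3*π/8) ∧ (∫ t in (0:ℝ)..π, Real.sin t ^ 6 = 5*π/16) := by
  refine ⟨?_, ?_, ?_⟩
  · simpa using integral_sin_pow_even 1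
  · have := integral_sin_pow_even 2
    norm_num [Finset.prod_range_succ] at this ⊢
    linarith
  · have := integral_sin_pow_even 3
    norm_num [Finset.prod_range_succ] at this ⊢
    linarith

lemma poly_int (a0 a1 a2 a3 : ℝ) :
    ∫ t in (0:ℝ)..π, (a0 + a1 * Real.sin t^2 + a2 * Real.sin t^4 + a3 * Real.sin t^6)
      = a0*π + a1*(π/2) + a2*(3*π/8) + a3*(5*π/16) := by
  obtain ⟨h2, h4, h6⟩ := sin_pow_int
  rw [intervalIntegral.integral_add, intervalIntegral.integral_add, intervalIntegral.integral_add,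
    intervalIntegral.integral_const_mul, intervalIntegral.integral_const_mul,
    intervalIntegral.integral_const_mul, intervalIntegral.integral_const, h2, h4, h6]
  · simp [smul_eq_mul]; ring
  all_goals apply Continuous.intervalIntegrable; fun_prop

theorem stmt_0 (r : ℝ) (hr0 : 0 ≤ r) (hr1 : r < 1) :
    ∫ t in (0:ℝ)..π,
      ((1 - r^2)^4 * (1 - r^2 * Real.sin t ^ 2)) /
        (Real.sqrt (1 - r^2 * Real.sin t ^ 2) + r * Real.cos t)^4
      = π + (3/2) * π * r^2 := by
  have hx : ∀ t : ℝ, 0 < 1 - r^2 * Real.sin t ^ 2 := by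
    intro t
    nlinarith [sin_sq_le_one t, sq_nonneg (Real.sin t), sq_nonneg r, sq_nonneg (r * Real.sin t)]
  set g : ℝ → ℝ := fun t =>
    (1 - r^2 * Real.sin t ^ 2) * (Real.sqrt (1 - r^2 * Real.sin t ^ 2) - r * Real.cos t)^4 with hg
  have key : ∀ t : ℝ,
      ((1 - r^2) ^ 4 * (1 - r^2 * Real.sin t ^ 2)) /
        (Real.sqrt (1 - r^2 * Real.sin t ^ 2) + r * Real.cos t)^4 = g t := by
    intro t
    set s := Real.sqrt (1 - r^2 * Real.sin t ^ 2) with hs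
    set c := r * Real.cos t with hc
    have hs2 : s^2 = 1 - r^2 * Real.sin t ^ 2 := Real.sq_sqrt (hx t).le
    have hspos : 0 < s := Real.sqrt_pos.mpr (hx t)
    have hdiff : s^2 - c^2 = 1 - r^2 := by
      rw [hs2, hc]
      have := Real.sin_sq_add_cos_sq t
      nlinarith [this]
    have hpos : 0 < s + c := by nlinarith [hdiff, hspos, hr1, hr0, sq_nonneg (s - c)]
    rw [hg]
    rw [div_eq_iff (by positivity)]
    simp only []
    linear_combination (-(((1 - r^2)^3 + (1 - r^2)^2*(s^2 - c^2) + (1 - r^2)*(s^2 - c^2)^2 + (s^2 - c^2)^3) * (1 - r^2 * Real.sin t ^ 2))) * hdiff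
  rw [intervalIntegral.integral_congr (fun t _ => key t)]
  have hsym : (∫ t in (0:ℝ)..π, g t) = ∫ t in (0:ℝ)..π, g (π - t) := by
    rw [intervalIntegral.integral_comp_sub_left g π]
    norm_num
  have hsum : (∫ t in (0:ℝ)..π, g t)
      = (1/2) * ∫ t in (0:ℝ)..π, (g t + g (π - t)) := by
    rw [intervalIntegral.integral_add]
    · rw [← hsym]; ring
    · apply Continuous.intervalIntegrable
      rw [hg]; fun_prop
    · apply Continuous.intervalIntegrable
      rw [hg]
      fun_prop
  rw [hsum]
  have heq : ∀ t ∈ Set.uIcc (0:ℝ) π, (fun t => g t + g (π - t)) t =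
      (fun t => 2*((1 + 6*r^2 + r^4) + (-9*r^2 - 14*r^4 - r^6) * Real.sin t^2
        + (16*r^4 + 8*r^6) * Real.sin t^4 + (-8*r^6) * Real.sin t^6)) t := by
    intro t _
    simp only [hg, Real.sin_pi_sub, Real.cos_pi_sub]
    set s := Real.sqrt (1 - r^2 * Real.sin t ^ 2) with hs
    have hs2 : s^2 = 1 - r^2 * Real.sin t ^ 2 := Real.sq_sqrt (hx t).le
    have hcos : Real.cos t ^ 2 = 1 - Real.sin t ^ 2 := Real.cos_sq' t
    linear_combination (2*(1 - r^2*Real.sin t^2)*(s^2 + (1 - r^2*Real.sin t^2)) + 12*(1 - r^2*Real.sin t^2)*r^2*Real.cos t^2) * hs2 + (12*(1 - r^2*Real.sin t^2)^2*r^2 + 2*(1 - r^2*Real.sin t^2)*r^4*(Real.cos t^2 + 1 - Real.sin t^2)) * hcos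
  rw [intervalIntegral.integral_congr heq]
  have : (∫ t in (0:ℝ)..π, 2*((1 + 6*r^2 + r^4) + (-9*r^2 - 14*r^4 - r^6) * Real.sin t^2
        + (16*r^4 + 8*r^6) * Real.sin t^4 + (-8*r^6) * Real.sin t^6))
      = 2 * ∫ t in (0:ℝ)..π, ((1 + 6*r^2 + r^4) + (-9*r^2 - 14*r^4 - r^6) * Real.sin t^2
        + (16*r^4 + 8*r^6) * Real.sin t^4 + (-8*r^6) * Real.sin t^6) :=
    intervalIntegral.integral_const_mul _ _
  rw [this, poly_int]
  ring
end

section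
/- Let x, ẋ, p ∈ ℝ² with |x| < 1, ẋ ≠ 0, p ≠ 0, and let A, B, C be as follows: A = √((1-|x|²)|ẋ|² + ⟨x,ẋ⟩²), B = √((1-|x|²)|p|² + ⟨x,p⟩²), C = (1-|x|²)⟨ẋ,p⟩ + ⟨x,p⟩⟨x,ẋ⟩. Then -A³B² - ⟨x,p⟩²A³ + 2⟨x,p⟩⟨x,ẋ⟩A²B + CB(1-|x|²)|ẋ|² ≤ 0, with equality if and only if p = kẋ for some k > 0. -/
set_option maxHeartbeats 1000000

private lemma eq_of_sq_eq_sq'' {a b : ℝ} (ha : 0 < a) (hb : 0 ≤ b) (h : a^2 = b^2) : a = b := by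
  have h'' : a * a = b * b := by linear_combination h
  rcases mul_self_eq_mul_self_iff.mp h'' with h' | h'
  · exact h'
  · nlinarith

theorem stmt_10 (x v p : EuclideanSpace ℝ (Fin 2)) (hx : ‖x‖ < 1) (hv : v ≠ 0) (hp : p ≠ 0)
    (A B C : ℝ)
    (hA : A = Real.sqrt ((1 - ‖x‖^2) * ‖v‖^2 + (inner ℝ x v : ℝ)^2))
    (hB : B = Real.sqrt ((1 - ‖x‖^2) * ‖p‖^2 + (inner ℝ x p : ℝ)^2))
    (hC : C = (1 - ‖x‖^2) * (inner ℝ v p : ℝ) + (inner ℝ x p : ℝ) * (inner ℝ x v : ℝ)) :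
    (-A^3 * B^2 - (inner ℝ x p : ℝ)^2 * A^3 + 2 * (inner ℝ x p : ℝ) * (inner ℝ x v : ℝ) * A^2 * B
        + C * B * (1 - ‖x‖^2) * ‖v‖^2 ≤ 0)
      ∧
    (-A^3 * B^2 - (inner ℝ x p : ℝ)^2 * A^3 + 2 * (inner ℝ x p : ℝ) * (inner ℝ x v : ℝ) * A^2 * B
        + C * B * (1 - ‖x‖^2) * ‖v‖^2 = 0 ↔ ∃ k : ℝ, 0 < k ∧ p = k • v) := by
  set a : ℝ := (inner ℝ x v : ℝ) with ha
  set b : ℝ := (inner ℝ x p : ℝ) with hb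
  set w : ℝ := (inner ℝ v p : ℝ) with hw
  have hs : (0:ℝ) < 1 - ‖x‖^2 := by nlinarith [norm_nonneg x]
  set s : ℝ := 1 - ‖x‖^2 with hsdef
  have hvn : 0 < ‖v‖ := norm_pos_iff.mpr hv
  have hpn : 0 < ‖p‖ := norm_pos_iff.mpr hp
  have hsv : 0 < s * ‖v‖^2 := by positivity
  have hsp : 0 < s * ‖p‖^2 := by positivity
  have hA2 : A^2 = s*‖v‖^2 + a^2 := by
    rw [hA, Real.sq_sqrt]; nlinarith [sq_nonneg a]
  have hApos : 0 < A := by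
    rw [hA]; apply Real.sqrt_pos.mpr; nlinarith [sq_nonneg a]
  have hB2 : B^2 = s*‖p‖^2 + b^2 := by
    rw [hB, Real.sq_sqrt]; nlinarith [sq_nonneg b]
  have hBpos : 0 < B := by
    rw [hB]; apply Real.sqrt_pos.mpr; nlinarith [sq_nonneg b]
  have hcs : w^2 ≤ ‖v‖^2*‖p‖^2 := by
    have h := real_inner_mul_inner_self_le v p
    rw [real_inner_self_eq_norm_sq, real_inner_self_eq_norm_sq] at h
    rw [hw]; nlinarith [h]
  have hq : ‖b • v - a • p‖^2 = b^2*‖v‖^2 - 2*a*b*w + a^2*‖p‖^2 := by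
    rw [norm_sub_sq_real, real_inner_smul_left, real_inner_smul_right,
      norm_smul, norm_smul, ← hw]
    simp only [Real.norm_eq_abs, mul_pow, sq_abs]
    ring
  have hABC : A^2*B^2 - C^2 = s^2*(‖v‖^2*‖p‖^2 - w^2) + s*‖b•v - a•p‖^2 := by
    rw [hq, hA2, hB2, hC]; ring
  have hCle : C ≤ A*B := by
    nlinarith [mul_pos hApos hBpos, sq_nonneg ‖b•v - a•p‖, mul_pos hs hs]
  have hE : -A^3 * B^2 - b^2 * A^3 + 2 * b * a * A^2 * B + C * B * s * ‖v‖^2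
      = -A*(b*A - a*B)^2 - (s*‖v‖^2)*B*(A*B - C) := by
    linear_combination (-A*B^2) * hA2
  have hDB : 0 < (s*‖v‖^2)*B := mul_pos hsv hBpos
  constructor
  · rw [hE]
    nlinarith [sq_nonneg (b*A - a*B), hDB,
      mul_nonneg hDB.le (sub_nonneg.mpr hCle), hApos]
  · constructor
    · intro hzero
      rw [hE] at hzero
      have h2 : A*B ≤ C := by
        nlinarith [sq_nonneg (b*A - a*B), hDB, hApos,
          mul_nonneg hApos.le (sq_nonneg (b*A - a*B))]
      have hABeq : A*B = C := le_antisymm h2 hCle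
      have h1 : s^2*(‖v‖^2*‖p‖^2 - w^2) + s*‖b•v - a•p‖^2 = 0 := by
        rw [← hABC]; linear_combination (A*B + C) * hABeq
      have hw2 : w^2 = ‖v‖^2*‖p‖^2 :=
        le_antisymm hcs (by nlinarith [sq_nonneg ‖b•v - a•p‖, mul_pos hs hs])
      have hdep : ∃ c : ℝ, p = c • v := by
        have h1' : w * w = (‖v‖*‖p‖) * (‖v‖*‖p‖) := by linear_combination hw2
        rcases mul_self_eq_mul_self_iff.mp h1' with h | h
        · have hthis : ‖p‖ • v = ‖v‖ • p := inner_eq_norm_mul_iff_real.mp (hw ▸ h)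
          refine ⟨‖v‖⁻¹*‖p‖, ?_⟩
          rw [mul_smul, hthis, smul_smul, inv_mul_cancel₀ hvn.ne', one_smul]
        · have h' : (inner ℝ (-v) p : ℝ) = ‖-v‖ * ‖p‖ := by
            rw [inner_neg_left, norm_neg, ← hw]; linarith
          have hthis : ‖p‖ • (-v) = ‖-v‖ • p := inner_eq_norm_mul_iff_real.mp h'
          rw [norm_neg] at hthis
          have h3 : ‖p‖ • v = -(‖v‖ • p) := by
            rw [← hthis, smul_neg, neg_neg]
          refine ⟨-(‖v‖⁻¹*‖p‖), ?_⟩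
          rw [neg_smul, mul_smul, h3, smul_neg, neg_neg, smul_smul,
            inv_mul_cancel₀ hvn.ne', one_smul]
      obtain ⟨c, hc⟩ := hdep
      have hcne : c ≠ 0 := by
        rintro rfl; rw [zero_smul] at hc; exact hp hc
      have hbv : b = c * a := by rw [hb, hc, real_inner_smul_right, ha]
      have hwv : w = c * ‖v‖^2 := by
        rw [hw, hc, real_inner_smul_right, real_inner_self_eq_norm_sq]
      have hCval : C = c * A^2 := by rw [hC, hA2, hbv, hwv]; ring
      have hBval : B = |c| * A := by
        apply eq_of_sq_eq_sq'' hBpos (by positivity)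
        rw [hB2, hbv, hc, norm_smul]
        simp only [Real.norm_eq_abs, mul_pow, sq_abs]
        linear_combination (-(c^2)) * hA2
      have hcpos : 0 < c := by
        rcases abs_cases c with ⟨h1, h2⟩ | ⟨h1, h2⟩
        · exact lt_of_le_of_ne h2 (Ne.symm hcne)
        · exfalso
          rw [hBval, h1, hCval] at hABeq
          have hA2pos : 0 < A^2 := by positivity
          nlinarith [hA2pos, h2]
      exact ⟨c, hcpos, hc⟩
    · rintro ⟨k, hk, rfl⟩
      have hbv : b = k * a := by rw [hb, real_inner_smul_right, ha]
      have hwv : w = k * ‖v‖^2 := by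
        rw [hw, real_inner_smul_right, real_inner_self_eq_norm_sq]
      have hBval : B = k * A := by
        apply eq_of_sq_eq_sq'' hBpos (by positivity)
        rw [hB2, hbv, norm_smul]
        simp only [Real.norm_eq_abs, mul_pow, sq_abs]
        linear_combination (-(k^2)) * hA2
      have hCval : C = k * A^2 := by rw [hC, hA2, hbv, hwv]; ring
      rw [hE, hbv, hBval, hCval]; ring
end

section
/- Let g(x₁,x₂,ẋ₁,ẋ₂) = ((1-x₁²-x₂²)(ẋ₁²+ẋ₂²) + 2(x₁ẋ₁+x₂ẋ₂)²)/((1-x₁²-x₂²)²·√((1-x₁²-x₂²)(ẋ₁²+ẋ₂²)+(x₁ẋ₁+x₂ẋ₂)²)). Along the circle c₀(t) = (a cos t, a sin t), 0 < a < 1, the expression P₁(t) = g_{x₁} - d/dt(g_{ẋ₁}) evaluated at (c₀(t), ċ₀(t)) equals ((1+2a²)/(1-a²)^(5/2))·cos t, and P₂(t) = g_{x₂} - d/dt(g_{ẋ₂}) equals ((1+2a²)/(1-a²)^(5/2))·sin t. -/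
open Real

noncomputable def lengthIntegrand (x₁ x₂ v₁ v₂ : ℝ) : ℝ :=
  ((1 - x₁^2 - x₂^2) * (v₁^2 + v₂^2) + 2 * (x₁*v₁ + x₂*v₂)^2) /
    ((1 - x₁^2 - x₂^2)^2 *
      Real.sqrt ((1 - x₁^2 - x₂^2) * (v₁^2 + v₂^2) + (x₁*v₁ + x₂*v₂)^2))

lemma shape1 (p e c k x : ℝ) (hp : 0 < p) (hE : 0 < x^2 + e) (hck : c*x + k = 0) :
    deriv (fun v => (p * (v^2 + e) + 2 * (c*v + k)^2) /
      (p^2 * Real.sqrt (p * (v^2 + e) + (c*v + k)^2))) x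
    = x * (x^2 + e) / (Real.sqrt (p * (x^2 + e)))^3 := by
  have hdval : p * (x^2 + e) + (c*x + k)^2 = p * (x^2+e) := by rw [hck]; ring
  have hd0 : 0 < p * (x^2+e) := mul_pos hp hE
  have hsd0 : 0 < Real.sqrt (p * (x^2+e)) := Real.sqrt_pos.2 hd0
  have hsd2 : Real.sqrt (p*(x^2+e))^2 = p*(x^2+e) := Real.sq_sqrt hd0.le
  have h1 : HasDerivAt (fun v : ℝ => v^2 + e) (2*x) x := by
    simpa using (hasDerivAt_pow 2 x).add_const e
  have h2 : HasDerivAt (fun v : ℝ => c*v + k) c x := by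
    simpa using ((hasDerivAt_id x).const_mul c).add_const k
  have h3 : HasDerivAt (fun v : ℝ => (c*v + k)^2) (2*(c*x+k)*c) x := by
    simpa [Pi.pow_def] using h2.pow 2
  have hn : HasDerivAt (fun v : ℝ => p * (v^2+e) + 2*(c*v+k)^2) (p*(2*x) + 2*(2*(c*x+k)*c)) x := by
    simpa [Pi.add_def] using (h1.const_mul p).add (h3.const_mul 2)
  have hd : HasDerivAt (fun v : ℝ => p * (v^2+e) + (c*v+k)^2) (p*(2*x) + (2*(c*x+k)*c)) x :=
    (h1.const_mul p).add h3
  have hfx : p * (x^2+e) + (c*x+k)^2 ≠ 0 := by rw [hdval]; exact hd0.ne'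
  have hq : HasDerivAt (fun v : ℝ => Real.sqrt (p*(v^2+e) + (c*v+k)^2))
      ((p*(2*x) + (2*(c*x+k)*c)) / (2 * Real.sqrt (p*(x^2+e)+(c*x+k)^2))) x := hd.sqrt hfx
  have hden : HasDerivAt (fun v : ℝ => p^2 * Real.sqrt (p*(v^2+e)+(c*v+k)^2))
      (p^2 * ((p*(2*x)+(2*(c*x+k)*c))/(2*Real.sqrt (p*(x^2+e)+(c*x+k)^2)))) x := hq.const_mul _
  have hden0 : p^2 * Real.sqrt (p*(x^2+e)+(c*x+k)^2) ≠ 0 := by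
    rw [hdval]; positivity
  have hdiv := (hn.fun_div hden hden0).deriv
  rw [hdiv, hdval, hck]
  generalize hgen : Real.sqrt (p*(x^2+e)) = sd at hsd0 hsd2 ⊢
  have hsd := hsd0.ne'
  field_simp
  linear_combination (2*p*x) * hsd2

lemma shape2 (p e c k x : ℝ) (hp : 0 < p) (hE : 0 < e + x^2) (hck : k + c*x = 0) :
    deriv (fun v => (p * (e + v^2) + 2 * (k + c*v)^2) /
      (p^2 * Real.sqrt (p * (e + v^2) + (k + c*v)^2))) x
    = x * (e + x^2) / (Real.sqrt (p * (e + x^2)))^3 := by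
  have hdval : p * (e + x^2) + (k + c*x)^2 = p * (e + x^2) := by rw [hck]; ring
  have hd0 : 0 < p * (e + x^2) := mul_pos hp hE
  have hsd0 : 0 < Real.sqrt (p * (e + x^2)) := Real.sqrt_pos.2 hd0
  have hsd2 : Real.sqrt (p*(e + x^2))^2 = p*(e + x^2) := Real.sq_sqrt hd0.le
  have h1 : HasDerivAt (fun v : ℝ => e + v^2) (2*x) x := by
    simpa using (hasDerivAt_pow 2 x).const_add e
  have h2 : HasDerivAt (fun v : ℝ => k + c*v) c x := by
    simpa using ((hasDerivAt_id x).const_mul c).const_add k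
  have h3 : HasDerivAt (fun v : ℝ => (k + c*v)^2) (2*(k+c*x)*c) x := by
    simpa [Pi.pow_def] using h2.pow 2
  have hn : HasDerivAt (fun v : ℝ => p * (e + v^2) + 2*(k+c*v)^2) (p*(2*x) + 2*(2*(k+c*x)*c)) x := by
    simpa [Pi.add_def] using (h1.const_mul p).add (h3.const_mul 2)
  have hd : HasDerivAt (fun v : ℝ => p * (e + v^2) + (k+c*v)^2) (p*(2*x) + (2*(k+c*x)*c)) x :=
    (h1.const_mul p).add h3
  have hfx : p * (e + x^2) + (k+c*x)^2 ≠ 0 := by rw [hdval]; exact hd0.ne'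
  have hq : HasDerivAt (fun v : ℝ => Real.sqrt (p*(e + v^2) + (k+c*v)^2))
      ((p*(2*x) + (2*(k+c*x)*c)) / (2 * Real.sqrt (p*(e + x^2)+(k+c*x)^2))) x := hd.sqrt hfx
  have hden : HasDerivAt (fun v : ℝ => p^2 * Real.sqrt (p*(e + v^2)+(k+c*v)^2))
      (p^2 * ((p*(2*x)+(2*(k+c*x)*c))/(2*Real.sqrt (p*(e + x^2)+(k+c*x)^2)))) x := hq.const_mul _
  have hden0 : p^2 * Real.sqrt (p*(e + x^2)+(k+c*x)^2) ≠ 0 := by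
    rw [hdval]; positivity
  have hdiv := (hn.fun_div hden hden0).deriv
  rw [hdiv, hdval, hck]
  generalize hgen : Real.sqrt (p*(e + x^2)) = sd at hsd0 hsd2 ⊢
  have hsd := hsd0.ne'
  field_simp
  linear_combination (2*p*x) * hsd2

lemma shape3 (b E c k x : ℝ) (hp : 0 < 1 - x^2 - b) (hE : 0 < E) (hck : x*c + k = 0) :
    deriv (fun u => ((1 - u^2 - b) * E + 2 * (u*c + k)^2) /
      ((1 - u^2 - b)^2 * Real.sqrt ((1 - u^2 - b) * E + (u*c + k)^2))) x
    = 3*x*E^2 / ((1 - x^2 - b) * (Real.sqrt ((1 - x^2 - b) * E))^3) := by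
  have hdval : (1 - x^2 - b) * E + (x*c + k)^2 = (1 - x^2 - b) * E := by rw [hck]; ring
  have hd0 : 0 < (1 - x^2 - b) * E := mul_pos hp hE
  have hsd0 : 0 < Real.sqrt ((1 - x^2 - b) * E) := Real.sqrt_pos.2 hd0
  have hsd2 : Real.sqrt ((1 - x^2 - b) * E)^2 = (1 - x^2 - b) * E := Real.sq_sqrt hd0.le
  have hA : HasDerivAt (fun u : ℝ => 1 - u^2 - b) (-(2*x)) x := by
    simpa using ((hasDerivAt_pow 2 x).const_sub 1).sub_const b
  have h2 : HasDerivAt (fun u : ℝ => u*c + k) c x := by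
    simpa using ((hasDerivAt_id x).mul_const c).add_const k
  have h3 : HasDerivAt (fun u : ℝ => (u*c + k)^2) (2*(x*c+k)*c) x := by
    simpa [Pi.pow_def] using h2.pow 2
  have hn : HasDerivAt (fun u : ℝ => (1 - u^2 - b) * E + 2*(u*c+k)^2)
      (-(2*x)*E + 2*(2*(x*c+k)*c)) x := by
    simpa [Pi.add_def] using (hA.mul_const E).add (h3.const_mul 2)
  have hd : HasDerivAt (fun u : ℝ => (1 - u^2 - b) * E + (u*c+k)^2)
      (-(2*x)*E + (2*(x*c+k)*c)) x := (hA.mul_const E).add h3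
  have hfx : (1 - x^2 - b) * E + (x*c+k)^2 ≠ 0 := by rw [hdval]; exact hd0.ne'
  have hq : HasDerivAt (fun u : ℝ => Real.sqrt ((1 - u^2 - b) * E + (u*c+k)^2))
      ((-(2*x)*E + (2*(x*c+k)*c)) / (2 * Real.sqrt ((1 - x^2 - b) * E + (x*c+k)^2))) x :=
    hd.sqrt hfx
  have hA2 : HasDerivAt (fun u : ℝ => (1 - u^2 - b)^2) (2*(1 - x^2 - b)*(-(2*x))) x := by
    simpa [Pi.pow_def] using hA.pow 2
  have hden : HasDerivAt (fun u : ℝ => (1 - u^2 - b)^2 * Real.sqrt ((1 - u^2 - b) * E + (u*c+k)^2))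
      (2*(1 - x^2 - b)*(-(2*x)) * Real.sqrt ((1 - x^2 - b) * E + (x*c+k)^2)
        + (1 - x^2 - b)^2 * ((-(2*x)*E + (2*(x*c+k)*c)) / (2 * Real.sqrt ((1 - x^2 - b) * E + (x*c+k)^2)))) x :=
    hA2.mul hq
  have hden0 : (1 - x^2 - b)^2 * Real.sqrt ((1 - x^2 - b) * E + (x*c+k)^2) ≠ 0 := by
    rw [hdval]; positivity
  have hdiv := (hn.fun_div hden hden0).deriv
  rw [hdiv, hdval, hck]
  generalize hgen : Real.sqrt ((1 - x^2 - b) * E) = sd at hsd0 hsd2 ⊢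
  generalize hpgen : 1 - x^2 - b = p at hp hsd2 ⊢
  have hsd := hsd0.ne'
  have hp' := hp.ne'
  rw [← hsd2]
  field_simp
  linear_combination (4*x*sd^2+3*x*p*E) * hsd2

lemma shape4 (b E c k x : ℝ) (hp : 0 < 1 - b - x^2) (hE : 0 < E) (hck : k + x*c = 0) :
    deriv (fun u => ((1 - b - u^2) * E + 2 * (k + u*c)^2) /
      ((1 - b - u^2)^2 * Real.sqrt ((1 - b - u^2) * E + (k + u*c)^2))) x
    = 3*x*E^2 / ((1 - b - x^2) * (Real.sqrt ((1 - b - x^2) * E))^3) := by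
  have hdval : (1 - b - x^2) * E + (k + x*c)^2 = (1 - b - x^2) * E := by rw [hck]; ring
  have hd0 : 0 < (1 - b - x^2) * E := mul_pos hp hE
  have hsd0 : 0 < Real.sqrt ((1 - b - x^2) * E) := Real.sqrt_pos.2 hd0
  have hsd2 : Real.sqrt ((1 - b - x^2) * E)^2 = (1 - b - x^2) * E := Real.sq_sqrt hd0.le
  have hA : HasDerivAt (fun u : ℝ => 1 - b - u^2) (-(2*x)) x := by
    simpa using (hasDerivAt_pow 2 x).const_sub (1 - b)
  have h2 : HasDerivAt (fun u : ℝ => k + u*c) c x := by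
    simpa using ((hasDerivAt_id x).mul_const c).const_add k
  have h3 : HasDerivAt (fun u : ℝ => (k + u*c)^2) (2*(k+x*c)*c) x := by
    simpa [Pi.pow_def] using h2.pow 2
  have hn : HasDerivAt (fun u : ℝ => (1 - b - u^2) * E + 2*(k+u*c)^2)
      (-(2*x)*E + 2*(2*(k+x*c)*c)) x := by
    simpa [Pi.add_def] using (hA.mul_const E).add (h3.const_mul 2)
  have hd : HasDerivAt (fun u : ℝ => (1 - b - u^2) * E + (k+u*c)^2)
      (-(2*x)*E + (2*(k+x*c)*c)) x := (hA.mul_const E).add h3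
  have hfx : (1 - b - x^2) * E + (k+x*c)^2 ≠ 0 := by rw [hdval]; exact hd0.ne'
  have hq : HasDerivAt (fun u : ℝ => Real.sqrt ((1 - b - u^2) * E + (k+u*c)^2))
      ((-(2*x)*E + (2*(k+x*c)*c)) / (2 * Real.sqrt ((1 - b - x^2) * E + (k+x*c)^2))) x :=
    hd.sqrt hfx
  have hA2 : HasDerivAt (fun u : ℝ => (1 - b - u^2)^2) (2*(1 - b - x^2)*(-(2*x))) x := by
    simpa [Pi.pow_def] using hA.pow 2
  have hden : HasDerivAt (fun u : ℝ => (1 - b - u^2)^2 * Real.sqrt ((1 - b - u^2) * E + (k+u*c)^2))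
      (2*(1 - b - x^2)*(-(2*x)) * Real.sqrt ((1 - b - x^2) * E + (k+x*c)^2)
        + (1 - b - x^2)^2 * ((-(2*x)*E + (2*(k+x*c)*c)) / (2 * Real.sqrt ((1 - b - x^2) * E + (k+x*c)^2)))) x :=
    hA2.mul hq
  have hden0 : (1 - b - x^2)^2 * Real.sqrt ((1 - b - x^2) * E + (k+x*c)^2) ≠ 0 := by
    rw [hdval]; positivity
  have hdiv := (hn.fun_div hden hden0).deriv
  rw [hdiv, hdval, hck]
  generalize hgen : Real.sqrt ((1 - b - x^2) * E) = sd at hsd0 hsd2 ⊢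
  generalize hpgen : 1 - b - x^2 = p at hp hsd2 ⊢
  have hsd := hsd0.ne'
  have hp' := hp.ne'
  rw [← hsd2]
  field_simp
  linear_combination (4*x*sd^2+3*x*p*E) * hsd2

theorem stmt_13 (a t : ℝ) (ha0 : 0 < a) (ha1 : a < 1) :
    (deriv (fun s => lengthIntegrand s (a * Real.sin t) (-a * Real.sin t) (a * Real.cos t))
        (a * Real.cos t)
      - deriv (fun τ => deriv
          (fun v => lengthIntegrand (a * Real.cos τ) (a * Real.sin τ) v (a * Real.cos τ))
          (-a * Real.sin τ)) t
      = ((1 + 2*a^2) / (1 - a^2) ^ ((5:ℝ)/2)) * Real.cos t)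
    ∧
    (deriv (fun s => lengthIntegrand (a * Real.cos t) s (-a * Real.sin t) (a * Real.cos t))
        (a * Real.sin t)
      - deriv (fun τ => deriv
          (fun v => lengthIntegrand (a * Real.cos τ) (a * Real.sin τ) (-a * Real.sin τ) v)
          (a * Real.cos τ)) t
      = ((1 + 2*a^2) / (1 - a^2) ^ ((5:ℝ)/2)) * Real.sin t) := by
  have h1a2 : (0:ℝ) < 1 - a^2 := by nlinarith
  set S := Real.sqrt (1 - a^2) with hSdef
  have hS0 : 0 < S := Real.sqrt_pos.2 h1a2
  have hS2 : S^2 = 1 - a^2 := Real.sq_sqrt h1a2.le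
  have hp1 : ∀ τ : ℝ, 1 - (a*Real.cos τ)^2 - (a*Real.sin τ)^2 = 1 - a^2 := fun τ => by
    linear_combination (-(a^2)) * Real.sin_sq_add_cos_sq τ
  have hE1 : ∀ τ : ℝ, (-a*Real.sin τ)^2 + (a*Real.cos τ)^2 = a^2 := fun τ => by
    linear_combination (a^2) * Real.sin_sq_add_cos_sq τ
  have hsqrtS : Real.sqrt ((1 - a^2) * a^2) = S * a := by
    rw [Real.sqrt_mul h1a2.le, Real.sqrt_sq ha0.le]
  have h52 : (1 - a^2) ^ ((5:ℝ)/2) = S^5 := by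
    rw [show ((5:ℝ)/2) = ((1:ℝ)/2) * ((5:ℕ):ℝ) by norm_num, Real.rpow_mul h1a2.le,
      Real.rpow_natCast, hSdef, Real.sqrt_eq_rpow]
  constructor
  · -- first component
    -- term 1 : ∂g/∂x₁
    have hT1 : deriv (fun s => lengthIntegrand s (a * Real.sin t) (-a * Real.sin t) (a * Real.cos t))
        (a * Real.cos t) = 3*a^2*Real.cos t / S^5 := by
      simp only [lengthIntegrand]
      rw [shape3 ((a*Real.sin t)^2) ((-a*Real.sin t)^2 + (a*Real.cos t)^2) (-a*Real.sin t)
        (a*Real.sin t*(a*Real.cos t)) (a*Real.cos t)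
        (by rw [show (1:ℝ) - (a*Real.cos t)^2 - (a*Real.sin t)^2 = 1 - a^2 from hp1 t]; exact h1a2)
        (by rw [hE1 t]; positivity) (by ring)]
      rw [show (1:ℝ) - (a*Real.cos t)^2 - (a*Real.sin t)^2 = 1 - a^2 from hp1 t, hE1 t, hsqrtS,
        ← hS2]
      field_simp
    -- term 2 : d/dt ∂g/∂v₁
    have hInner : (fun τ => deriv
        (fun v => lengthIntegrand (a * Real.cos τ) (a * Real.sin τ) v (a * Real.cos τ))
        (-a * Real.sin τ)) = fun τ => -Real.sin τ / S^3 := by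
      funext τ
      simp only [lengthIntegrand]
      rw [shape1 (1 - (a*Real.cos τ)^2 - (a*Real.sin τ)^2) ((a*Real.cos τ)^2) (a*Real.cos τ)
        (a*Real.sin τ*(a*Real.cos τ)) (-a*Real.sin τ)
        (by rw [hp1 τ]; exact h1a2) (by rw [hE1 τ]; positivity) (by ring)]
      rw [hp1 τ, hE1 τ, hsqrtS]
      field_simp
    rw [hInner]
    have hT2 : deriv (fun τ => -Real.sin τ / S^3) t = -Real.cos t / S^3 :=
      (((Real.hasDerivAt_sin t).neg).div_const (S^3)).deriv
    rw [hT1, hT2, h52]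
    field_simp
    linear_combination (Real.cos t) * hS2
  · -- second component
    have hT1 : deriv (fun s => lengthIntegrand (a * Real.cos t) s (-a * Real.sin t) (a * Real.cos t))
        (a * Real.sin t) = 3*a^2*Real.sin t / S^5 := by
      simp only [lengthIntegrand]
      rw [shape4 ((a*Real.cos t)^2) ((-a*Real.sin t)^2 + (a*Real.cos t)^2) (a*Real.cos t)
        (a*Real.cos t*(-a*Real.sin t)) (a*Real.sin t)
        (by rw [show (1:ℝ) - (a*Real.cos t)^2 - (a*Real.sin t)^2 = 1 - a^2 from hp1 t]; exact h1a2)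
        (by rw [hE1 t]; positivity) (by ring)]
      rw [show (1:ℝ) - (a*Real.cos t)^2 - (a*Real.sin t)^2 = 1 - a^2 from hp1 t, hE1 t, hsqrtS,
        ← hS2]
      field_simp
    have hInner : (fun τ => deriv
        (fun v => lengthIntegrand (a * Real.cos τ) (a * Real.sin τ) (-a * Real.sin τ) v)
        (a * Real.cos τ)) = fun τ => Real.cos τ / S^3 := by
      funext τ
      simp only [lengthIntegrand]
      rw [shape2 (1 - (a*Real.cos τ)^2 - (a*Real.sin τ)^2) ((-a*Real.sin τ)^2) (a*Real.sin τ)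
        (a*Real.cos τ*(-a*Real.sin τ)) (a*Real.cos τ)
        (by rw [hp1 τ]; exact h1a2) (by rw [hE1 τ]; positivity) (by ring)]
      rw [hp1 τ, hE1 τ, hsqrtS]
      field_simp
    rw [hInner]
    have hT2 : deriv (fun τ => Real.cos τ / S^3) t = -Real.sin t / S^3 :=
      ((Real.hasDerivAt_cos t).div_const (S^3)).deriv
    rw [hT1, hT2, h52]
    field_simp
    linear_combination (Real.sin t) * hS2
end
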